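/- For the Z-fanout simulation block: starting from state |d⃗, 0⃗, ..., 0⃗⟩ on n + n² qubits, applying fanout to copy d⃗ into each of n blocks, then in each block i applying the phase (-1)^(d_i c_{ii} Σ_{j≠i} d_j c_{ij}), then uncopying, yields the state (-1)^(Σ_i d_i c_{ii} Σ_{j≠i} d_j c_{ij}) |d⃗, 0⃗, ..., 0⃗⟩. In particular, choosing the Boolean parameters c_{ij} appropriately, this implements any product of Z-fanout gates with distinct control qubits acting on the data register d⃗. -/

import Mathlib

/-!
Copying is an involution (`b ↦ b ⊕ d` twice is the identity), so the uncopy step returns the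
ancilla blocks to `0⃗`, and the phase step is diagonal, so in between the basis state only picks
up the phase evaluated on the copied state, in which every block holds `d⃗`. For the parameters
encoding a layer of `Z`-fanout gates, `c_{ii} = 1` exactly for the controls `i ∈ A`, and since
`i ∉ S i` the inner sum for such an `i` counts the targets `j ∈ S i` with `d_j = 1`.
-/

variable (n : ℕ)

/-- Basis states of the `n + n²` qubits: the data register `d⃗ ∈ {0,1}^n`
together with the `n` ancilla blocks `B_1, …, B_n` of `n` qubits each. -/
def BState (n : ℕ) : Type := (Fin n → Bool) × (Fin n → Fin n → Bool)

instance : DecidableEq (BState n) := by unfold BState; infer_instance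
instance : Fintype (BState n) := by unfold BState; infer_instance

/-- The computational basis vector indexed by `z`. -/
def basisVec {n : ℕ} (z : BState n) : BState n → ℂ :=
  fun w => if w = z then 1 else 0

/-- The copying step: fanout gates XOR the data register into each block, so
block qubit `b_{ij}` becomes `b_{ij} ⊕ d_j`.  (Applied to blocks initialized
to 0 this copies `d⃗` into each block; applied again it uncopies.) -/
def copyFun {n : ℕ} (y : BState n) : BState n :=
  (y.1, fun i j => xor (y.2 i j) (y.1 j))

/-- The copy/uncopy step as a matrix. -/
def copyMat (n : ℕ) : Matrix (BState n) (BState n) ℂ :=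
  fun x y => if x = copyFun y then 1 else 0

/-- The middle phase step, with Boolean parameters `c i j`: block `i`
contributes the phase `(-1)^(b_{ii} c_{ii} · Σ_{j ≠ i} b_{ij} c_{ij})`. -/
def phaseMat (n : ℕ) (c : Fin n → Fin n → Bool) : Matrix (BState n) (BState n) ℂ :=
  Matrix.diagonal fun z =>
    (-1 : ℂ) ^ ∑ i : Fin n,
      if z.2 i i && c i i then
        ∑ j ∈ Finset.univ.erase i, (if z.2 i j && c i j then 1 else 0) else 0

/-- The whole simulation block: copy, phase, uncopy. -/
noncomputable def blockMat (n : ℕ) (c : Fin n → Fin n → Bool) : Matrix (BState n) (BState n) ℂ :=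
  copyMat n * phaseMat n c * copyMat n

/-- All ancilla blocks set to 0. -/
def zeroBlocks (n : ℕ) : Fin n → Fin n → Bool := fun _ _ => false

/-- The choice of parameters encoding a layer of `Z`-fanout gates with
(distinct) controls `i ∈ A` and target sets `S i`. -/
def encParams {n : ℕ} (A : Finset (Fin n)) (S : Fin n → Finset (Fin n)) :
    Fin n → Fin n → Bool :=
  fun i j => if i = j then decide (i ∈ A) else decide (i ∈ A ∧ j ∈ S i)

lemma basisVec_eq_single {n : ℕ} (z : BState n) : basisVec z = Pi.single z 1 := by
  funext w
  simp [basisVec, Pi.single_apply]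

lemma copyMat_mulVec_basisVec {n : ℕ} (z : BState n) :
    (copyMat n).mulVec (basisVec z) = basisVec (copyFun z) := by
  funext x
  simp [Matrix.mulVec, dotProduct, copyMat, basisVec]

lemma copyFun_copyFun {n : ℕ} (z : BState n) : copyFun (copyFun z) = z := by
  simp only [copyFun, Bool.xor_assoc, Bool.xor_self, Bool.xor_false]
  rfl

lemma copyFun_zeroBlocks {n : ℕ} (d : Fin n → Bool) :
    copyFun ((d, zeroBlocks n) : BState n) = ((d, fun _ => d) : BState n) := by
  simp only [copyFun, zeroBlocks, Bool.false_xor]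
  rfl

lemma diagonal_mulVec_basisVec {n : ℕ} (f : BState n → ℂ) (z : BState n) :
    (Matrix.diagonal f).mulVec (basisVec z) = f z • basisVec z := by
  rw [basisVec_eq_single, Matrix.diagonal_mulVec_single, ← Pi.single_smul, smul_eq_mul, mul_one]

lemma phaseMat_mulVec_basisVec {n : ℕ} (c : Fin n → Fin n → Bool) (z : BState n) :
    (phaseMat n c).mulVec (basisVec z) =
      ((-1 : ℂ) ^ ∑ i : Fin n,
          if z.2 i i && c i i then
            ∑ j ∈ Finset.univ.erase i, (if z.2 i j && c i j then 1 else 0) else 0) •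
        basisVec z :=
  diagonal_mulVec_basisVec _ z

lemma blockMat_mulVec_basisVec_zeroBlocks (n : ℕ) (c : Fin n → Fin n → Bool)
    (d : Fin n → Bool) :
    (blockMat n c).mulVec (basisVec (d, zeroBlocks n)) =
      ((-1 : ℂ) ^ ∑ i : Fin n,
          if d i && c i i then
            ∑ j ∈ Finset.univ.erase i, (if d j && c i j then 1 else 0) else 0) •
        basisVec (d, zeroBlocks n) := by
  -- `BState n` is not reducible, so the rewrites below only match once `(d, zeroBlocks n)` is
  -- given that type explicitly.
  set z : BState n := (d, zeroBlocks n)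
  rw [blockMat, ← Matrix.mulVec_mulVec, ← Matrix.mulVec_mulVec, copyMat_mulVec_basisVec,
    phaseMat_mulVec_basisVec, Matrix.mulVec_smul, copyMat_mulVec_basisVec, copyFun_copyFun, copyFun_zeroBlocks]

lemma sum_erase_encParams_eq_card {n : ℕ} {A : Finset (Fin n)} {S : Fin n → Finset (Fin n)}
    {i : Fin n} (hi : i ∈ A) (hiS : i ∉ S i) (d : Fin n → Bool) :
    ∑ j ∈ Finset.univ.erase i, (if d j && encParams A S i j then 1 else 0) =
      ((S i).filter fun j => d j = true).card := by
  rw [Finset.sum_boole, Nat.cast_id]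
  congr 1
  ext j
  by_cases hj : j = i
  · subst hj; simp [hiS]
  · simp [encParams, hj, Ne.symm hj, hi, and_comm]

lemma neg_one_pow_encParams_eq_prod {n : ℕ} (A : Finset (Fin n)) (S : Fin n → Finset (Fin n))
    (hS : ∀ i, i ∉ S i) (d : Fin n → Bool) :
    (-1 : ℂ) ^ (∑ i : Fin n,
        if d i && encParams A S i i then
          ∑ j ∈ Finset.univ.erase i, (if d j && encParams A S i j then 1 else 0) else 0) =
      ∏ i ∈ A, if d i then (-1 : ℂ) ^ ((S i).filter fun j => d j = true).card else 1 := by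
  rw [← Finset.prod_pow_eq_pow_sum, ← Finset.prod_subset (Finset.subset_univ A)]
  · refine Finset.prod_congr rfl fun i hi => ?_
    have hdiag : encParams A S i i = true := by simp [encParams, hi]
    rw [sum_erase_encParams_eq_card hi (hS i)]
    cases d i <;> simp [hdiag]
  · intro i _ hi
    simp [encParams, hi]

/-- starting from `|d⃗, 0⃗, …, 0⃗⟩`, the copy–phase–uncopy block
yields `(-1)^(Σ_i d_i c_{ii} Σ_{j≠i} d_j c_{ij}) |d⃗, 0⃗, …, 0⃗⟩`; in
particular, choosing the parameters `c` from a layer of `Z`-fanout gates with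
pairwise distinct controls `i ∈ A` and targets `S i` (with `i ∉ S i`), it applies to the
data register exactly the product of the phases `(-1)^(d_i Σ_{j ∈ S i} d_j)`
of those `Z`-fanout gates. -/
theorem zfanout_simulation_block (n : ℕ) :
    (∀ (c : Fin n → Fin n → Bool) (d : Fin n → Bool),
      (blockMat n c).mulVec (basisVec (d, zeroBlocks n)) =
        ((-1 : ℂ) ^ ∑ i : Fin n,
            if d i && c i i then
              ∑ j ∈ Finset.univ.erase i, (if d j && c i j then 1 else 0) else 0) •
          basisVec (d, zeroBlocks n)) ∧
    (∀ (A : Finset (Fin n)) (S : Fin n → Finset (Fin n)),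
      (∀ i, i ∉ S i) →
      ∀ d : Fin n → Bool,
        (blockMat n (encParams A S)).mulVec (basisVec (d, zeroBlocks n)) =
          (∏ i ∈ A, if d i then
              (-1 : ℂ) ^ ((S i).filter fun j => d j = true).card else 1) •
            basisVec (d, zeroBlocks n)) := by
  refine ⟨blockMat_mulVec_basisVec_zeroBlocks n, fun A S hS d => ?_⟩
  rw [blockMat_mulVec_basisVec_zeroBlocks, neg_one_pow_encParams_eq_prod A S hS]
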